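/- arXiv:1804.06900 — 9 statements merged into one kernel-verified Lean document; each statement's English description precedes it below -/
import Mathlib

section
/- Let N ≥ 1, let D be an N×N complex matrix with Dᴴ = −D, let σ > 0 be real, let d : Fin N → ℝ, and set A = σ·D² and B = D·(diag(d) − σ·I)·D. Then for every vector v ∈ ℂ^N satisfying ⟨v, (−A)·v⟩ = 1, the quantity ⟨v, B·v⟩ is real and satisfies 1 − σ⁻¹·d_max ≤ ⟨v, B·v⟩ ≤ 1 − σ⁻¹·d_min. (This is part 1 of Proposition 1: the set W₁(A,B) for splittings of this form is strictly real and contained in the interval [1 − σ⁻¹ d_max, 1 − σ⁻¹ d_min].) -/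
open Matrix

/-!
With `w = D v`, skew-Hermitianity turns `v* (D M D) v` into `-w* M w`. Both `-A` and `B` have the
form `D (diag c) D` with `c` real, so `⟨v, -A v⟩ = σ Σ |w_j|²` and `⟨v, B v⟩ = Σ (σ - d_j) |w_j|²`
are real. The normalisation makes the weights `|w_j|²` sum to `σ⁻¹`, and bounding `d_j` by
`d_min`, `d_max` gives the interval.
-/

namespace Matrix

variable {n : Type*} [Fintype n]

theorem star_vecMul_of_conjTranspose_eq_neg {R : Type*} [CommRing R] [StarRing R]
    {D : Matrix n n R} (hD : Dᴴ = -D) (v : n → R) :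
    star v ᵥ* D = -star (D *ᵥ v) := by
  rw [star_mulVec, hD, vecMul_neg, neg_neg]

theorem star_dotProduct_mul_mul_mulVec_of_conjTranspose_eq_neg {R : Type*} [CommRing R]
    [StarRing R] {D : Matrix n n R} (hD : Dᴴ = -D) (M : Matrix n n R) (v : n → R) :
    star v ⬝ᵥ (D * M * D) *ᵥ v = -(star (D *ᵥ v) ⬝ᵥ M *ᵥ (D *ᵥ v)) := by
  rw [← mulVec_mulVec, ← mulVec_mulVec, dotProduct_mulVec,
    star_vecMul_of_conjTranspose_eq_neg hD, neg_dotProduct]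

theorem star_dotProduct_diagonal_ofReal_mulVec [DecidableEq n] (c : n → ℝ) (w : n → ℂ) :
    star w ⬝ᵥ diagonal (fun j => (c j : ℂ)) *ᵥ w = ((∑ j, c j * Complex.normSq (w j) : ℝ) : ℂ) := by
  simp only [mulVec_diagonal, dotProduct, Pi.star_apply, Complex.ofReal_sum, Complex.ofReal_mul,
    Complex.normSq_eq_conj_mul_self, Complex.star_def]
  exact Finset.sum_congr rfl fun j _ => by ring

end Matrix

section WeightedSum

variable {ι : Type*} [Fintype ι] {s d : ι → ℝ} {σ m : ℝ}

theorem sum_sub_mul_eq_one_sub_sum_mul (hσ : σ * ∑ j, s j = 1) :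
    ∑ j, (σ - d j) * s j = 1 - ∑ j, d j * s j := by
  simp only [sub_mul, Finset.sum_sub_distrib, ← Finset.mul_sum, hσ]

theorem one_sub_inv_mul_le_sum_sub_mul (hs : ∀ j, 0 ≤ s j) (hσ : σ * ∑ j, s j = 1)
    (hm : ∀ j, d j ≤ m) :
    1 - σ⁻¹ * m ≤ ∑ j, (σ - d j) * s j := by
  rw [sum_sub_mul_eq_one_sub_sum_mul hσ, ← eq_inv_of_mul_eq_one_right hσ, mul_comm,
    Finset.mul_sum]
  exact sub_le_sub_left (Finset.sum_le_sum fun j _ => mul_le_mul_of_nonneg_right (hm j) (hs j)) 1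

theorem sum_sub_mul_le_one_sub_inv_mul (hs : ∀ j, 0 ≤ s j) (hσ : σ * ∑ j, s j = 1)
    (hm : ∀ j, m ≤ d j) :
    ∑ j, (σ - d j) * s j ≤ 1 - σ⁻¹ * m := by
  rw [sum_sub_mul_eq_one_sub_sum_mul hσ, ← eq_inv_of_mul_eq_one_right hσ, mul_comm,
    Finset.mul_sum]
  exact sub_le_sub_left (Finset.sum_le_sum fun j _ => mul_le_mul_of_nonneg_right (hm j) (hs j)) 1

end WeightedSum

theorem stmt0_general (N : ℕ)
    (D : Matrix (Fin N) (Fin N) ℂ) (hD : D.conjTranspose = -D)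
    (σ : ℝ) (d : Fin N → ℝ)
    (dmin dmax : ℝ)
    (hdmin : IsLeast (Set.range d) dmin)
    (hdmax : IsGreatest (Set.range d) dmax)
    (A B : Matrix (Fin N) (Fin N) ℂ)
    (hA : A = (σ : ℂ) • (D * D))
    (hB : B = D * (Matrix.diagonal (fun j => (d j : ℂ)) - (σ : ℂ) • 1) * D)
    (v : Fin N → ℂ)
    (hv : star v ⬝ᵥ (-A).mulVec v = 1) :
    (star v ⬝ᵥ B.mulVec v).im = 0 ∧
    1 - σ⁻¹ * dmax ≤ (star v ⬝ᵥ B.mulVec v).re ∧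
    (star v ⬝ᵥ B.mulVec v).re ≤ 1 - σ⁻¹ * dmin := by
  set s : Fin N → ℝ := fun j => Complex.normSq ((D *ᵥ v) j)
  have hquad (c : Fin N → ℝ) :
      star v ⬝ᵥ (D * diagonal (fun j => (c j : ℂ)) * D) *ᵥ v =
        ((∑ j, (-c j) * s j : ℝ) : ℂ) := by
    rw [star_dotProduct_mul_mul_mulVec_of_conjTranspose_eq_neg hD,
      star_dotProduct_diagonal_ofReal_mulVec]
    simp [s, Finset.sum_neg_distrib]
  have hA' : -A = D * diagonal (fun _ => ((-σ : ℝ) : ℂ)) * D := by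
    rw [hA, ← smul_one_eq_diagonal]
    simp
  have hB' : B = D * diagonal (fun j => ((d j - σ : ℝ) : ℂ)) * D := by
    rw [hB, smul_one_eq_diagonal, diagonal_sub]
    simp
  have hnorm : σ * ∑ j, s j = 1 := by
    rw [hA', hquad] at hv
    simp only [neg_neg] at hv
    rw [Finset.mul_sum]
    exact_mod_cast hv
  have hs : ∀ j, 0 ≤ s j := fun j => Complex.normSq_nonneg _
  rw [hB', hquad]
  simp only [neg_sub, Complex.ofReal_im, Complex.ofReal_re, true_and]
  exact ⟨one_sub_inv_mul_le_sum_sub_mul hs hnorm fun j => hdmax.2 ⟨j, rfl⟩,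
    sum_sub_mul_le_one_sub_inv_mul hs hnorm fun j => hdmin.2 ⟨j, rfl⟩⟩

/-- Proposition 1, part 1: for the splitting `A = σ D²`,
`B = D (diag d − σ I) D` with `Dᴴ = −D`, every element of
`W₁(A,B) = { ⟨v, B v⟩ : ⟨v, (−A) v⟩ = 1 }` is real and lies in
`[1 − σ⁻¹ d_max, 1 − σ⁻¹ d_min]`. -/
theorem stmt0 (N : ℕ) (hN : 1 ≤ N)
    (D : Matrix (Fin N) (Fin N) ℂ) (hD : D.conjTranspose = -D)
    (σ : ℝ) (hσ : 0 < σ) (d : Fin N → ℝ)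
    (dmin dmax : ℝ)
    (hdmin : IsLeast (Set.range d) dmin)
    (hdmax : IsGreatest (Set.range d) dmax)
    (A B : Matrix (Fin N) (Fin N) ℂ)
    (hA : A = (σ : ℂ) • (D * D))
    (hB : B = D * (Matrix.diagonal (fun j => (d j : ℂ)) - (σ : ℂ) • 1) * D)
    (v : Fin N → ℂ)
    (hv : star v ⬝ᵥ (-A).mulVec v = 1) :
    (star v ⬝ᵥ B.mulVec v).im = 0 ∧
    1 - σ⁻¹ * dmax ≤ (star v ⬝ᵥ B.mulVec v).re ∧
    (star v ⬝ᵥ B.mulVec v).re ≤ 1 - σ⁻¹ * dmin :=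
  stmt0_general N D hD σ d dmin dmax hdmin hdmax A B hA hB v hv
end

section
/- Let N ≥ 1, let D be an N×N complex matrix with Dᴴ = −D, let σ > 0 be real, let d : Fin N → ℝ, and set A = σ·D² and B = D·(diag(d) − σ·I)·D. Suppose μ ∈ ℂ and v ∈ ℂ^N satisfy μ·((−A)·v) = B·v and D·v ≠ 0. Then μ is real and 1 − σ⁻¹·d_max ≤ μ ≤ 1 − σ⁻¹·d_min. (This is the generalized-eigenvalue bound in part 2 of Proposition 1: all generalized eigenvalues μ ∈ Λ(A,B) with eigenvector outside the kernel of D are real and lie in [1 − σ⁻¹ d_max, 1 − σ⁻¹ d_min].) -/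
/-!
Put `w = D v`. Skew-Hermitian symmetry gives `⟨v, D M D v⟩ = -⟨w, M w⟩`, and both `-A = -σ D²` and
`B` have the form `D M D` with `M` real diagonal. Pairing the eigen-equation with `v` therefore gives
`μ · σ ∑ |w_j|² = ∑ (σ - d_j) |w_j|²`, a quotient of two real numbers with positive denominator
(as `w ≠ 0`), and the numerator lies between `(σ - d_max) ∑ |w_j|²` and `(σ - d_min) ∑ |w_j|²`.
-/

open Matrix

section WeightedNormSq

variable {ι : Type*} [Fintype ι]

def weightedNormSq (c : ι → ℝ) (w : ι → ℂ) : ℝ := ∑ j, c j * Complex.normSq (w j)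

theorem star_dotProduct_diagonal_mulVec [DecidableEq ι] (c : ι → ℝ) (w : ι → ℂ) :
    star w ⬝ᵥ (diagonal (fun j => (c j : ℂ)) *ᵥ w) = weightedNormSq c w := by
  simp only [weightedNormSq, mulVec_diagonal, dotProduct, Pi.star_apply, Complex.ofReal_sum,
    Complex.ofReal_mul, Complex.normSq_eq_conj_mul_self, Complex.star_def]
  exact Finset.sum_congr rfl fun j _ => by ring

theorem weightedNormSq_mono {c c' : ι → ℝ} (h : c ≤ c') (w : ι → ℂ) :
    weightedNormSq c w ≤ weightedNormSq c' w :=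
  Finset.sum_le_sum fun j _ => mul_le_mul_of_nonneg_right (h j) (Complex.normSq_nonneg _)

theorem weightedNormSq_const (a : ℝ) (w : ι → ℂ) :
    weightedNormSq (fun _ => a) w = a * ∑ j, Complex.normSq (w j) :=
  Finset.mul_sum _ _ _ |>.symm

theorem sum_normSq_pos {w : ι → ℂ} (hw : w ≠ 0) : 0 < ∑ j, Complex.normSq (w j) := by
  obtain ⟨j, hj⟩ := Function.ne_iff.mp hw
  exact Finset.sum_pos' (fun i _ => Complex.normSq_nonneg _)
    ⟨j, Finset.mem_univ j, Complex.normSq_pos.mpr hj⟩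

end WeightedNormSq

section SkewHermitian

variable {ι : Type*} [Fintype ι] {D : Matrix ι ι ℂ}

theorem star_dotProduct_mulVec_of_conjTranspose_eq_neg (hD : Dᴴ = -D) (v u : ι → ℂ) :
    star v ⬝ᵥ (D *ᵥ u) = -(star (D *ᵥ v) ⬝ᵥ u) := by
  rw [dotProduct_mulVec, star_mulVec, hD, vecMul_neg, neg_dotProduct, neg_neg]

theorem star_dotProduct_mul_diagonal_mul_mulVec [DecidableEq ι] (hD : Dᴴ = -D) (c : ι → ℝ) (v : ι → ℂ) :
    star v ⬝ᵥ ((D * diagonal (fun j => (c j : ℂ)) * D) *ᵥ v)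
      = -(weightedNormSq c (D *ᵥ v) : ℂ) := by
  rw [← mulVec_mulVec, ← mulVec_mulVec, star_dotProduct_mulVec_of_conjTranspose_eq_neg hD,
    star_dotProduct_diagonal_mulVec]

theorem eq_weightedNormSq_div_of_smul_mulVec_eq [DecidableEq ι] (hD : Dᴴ = -D) {a b : ι → ℝ} {μ : ℂ}
    {v : ι → ℂ} (h : μ • ((D * diagonal (fun j => (a j : ℂ)) * D) *ᵥ v)
      = (D * diagonal (fun j => (b j : ℂ)) * D) *ᵥ v)
    (ha : weightedNormSq a (D *ᵥ v) ≠ 0) :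
    μ = ((weightedNormSq b (D *ᵥ v) / weightedNormSq a (D *ᵥ v) : ℝ) : ℂ) := by
  have h' := congrArg (star v ⬝ᵥ ·) h
  simp only [dotProduct_smul, star_dotProduct_mul_diagonal_mul_mulVec hD, smul_eq_mul,
    mul_neg, neg_inj] at h'
  rw [Complex.ofReal_div, eq_div_iff (Complex.ofReal_ne_zero.mpr ha), h']

end SkewHermitian

theorem stmt1_general (N : ℕ)
    (D : Matrix (Fin N) (Fin N) ℂ) (hD : D.conjTranspose = -D)
    (σ : ℝ) (hσ : 0 < σ) (d : Fin N → ℝ)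
    (dmin dmax : ℝ)
    (hdmin : IsLeast (Set.range d) dmin)
    (hdmax : IsGreatest (Set.range d) dmax)
    (A B : Matrix (Fin N) (Fin N) ℂ)
    (hA : A = (σ : ℂ) • (D * D))
    (hB : B = D * (Matrix.diagonal (fun j => (d j : ℂ)) - (σ : ℂ) • 1) * D)
    (μ : ℂ) (v : Fin N → ℂ)
    (hμv : μ • (-A).mulVec v = B.mulVec v)
    (hDv : D.mulVec v ≠ 0) :
    μ.im = 0 ∧ 1 - σ⁻¹ * dmax ≤ μ.re ∧ μ.re ≤ 1 - σ⁻¹ * dmin := by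
  have hA_diag : A = D * diagonal (fun _ => (σ : ℂ)) * D := by
    rw [hA, ← smul_one_eq_diagonal, mul_smul_one, smul_mul_assoc]
  have hnegB_diag : -B = D * diagonal (fun j => ((σ - d j : ℝ) : ℂ)) * D := by
    rw [hB, ← neg_mul, ← mul_neg, neg_sub, smul_one_eq_diagonal, diagonal_sub]
    push_cast
    rfl
  set w := D *ᵥ v
  have hσw : 0 < σ * ∑ j, Complex.normSq (w j) := mul_pos hσ (sum_normSq_pos hDv)
  have hμ := eq_weightedNormSq_div_of_smul_mulVec_eq hD (a := fun _ => σ) (b := fun j => σ - d j)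
    (by rw [← hA_diag, ← hnegB_diag, neg_mulVec, ← hμv, neg_mulVec, smul_neg, neg_neg])
    (weightedNormSq_const σ w ▸ hσw.ne')
  rw [weightedNormSq_const] at hμ
  refine ⟨by rw [hμ, Complex.ofReal_im], ?_, ?_⟩ <;> rw [hμ, Complex.ofReal_re]
  · rw [le_div_iff₀ hσw]
    calc (1 - σ⁻¹ * dmax) * (σ * ∑ j, Complex.normSq (w j))
        = weightedNormSq (fun _ => σ - dmax) w := by rw [weightedNormSq_const]; field_simp
      _ ≤ weightedNormSq (fun j => σ - d j) w :=
        weightedNormSq_mono (fun j => by linarith [hdmax.2 ⟨j, rfl⟩]) w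
  · rw [div_le_iff₀ hσw]
    calc weightedNormSq (fun j => σ - d j) w
        ≤ weightedNormSq (fun _ => σ - dmin) w :=
        weightedNormSq_mono (fun j => by linarith [hdmin.2 ⟨j, rfl⟩]) w
      _ = (1 - σ⁻¹ * dmin) * (σ * ∑ j, Complex.normSq (w j)) := by
        rw [weightedNormSq_const]; field_simp

/-- Proposition 1, part 2 (generalized-eigenvalue bound): for the splitting
`A = σ D²`, `B = D (diag d − σ I) D` with `Dᴴ = −D`, any generalized
eigenvalue `μ` (with `μ (−A) v = B v` and `D v ≠ 0`) is real and lies in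
`[1 − σ⁻¹ d_max, 1 − σ⁻¹ d_min]`. -/
theorem stmt1 (N : ℕ) (hN : 1 ≤ N)
    (D : Matrix (Fin N) (Fin N) ℂ) (hD : D.conjTranspose = -D)
    (σ : ℝ) (hσ : 0 < σ) (d : Fin N → ℝ)
    (dmin dmax : ℝ)
    (hdmin : IsLeast (Set.range d) dmin)
    (hdmax : IsGreatest (Set.range d) dmax)
    (A B : Matrix (Fin N) (Fin N) ℂ)
    (hA : A = (σ : ℂ) • (D * D))
    (hB : B = D * (Matrix.diagonal (fun j => (d j : ℂ)) - (σ : ℂ) • 1) * D)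
    (μ : ℂ) (v : Fin N → ℂ)
    (hμv : μ • (-A).mulVec v = B.mulVec v)
    (hDv : D.mulVec v ≠ 0) :
    μ.im = 0 ∧ 1 - σ⁻¹ * dmax ≤ μ.re ∧ μ.re ≤ 1 - σ⁻¹ * dmin :=
  stmt1_general N D hD σ hσ d dmin dmax hdmin hdmax A B hA hB μ v hμv hDv
end

section
/- Let N ≥ 2, let D be an N×N complex matrix with Dᴴ = −D whose kernel (as a linear map on ℂ^N) is exactly the complex span of the all-ones vector 𝟙, let σ > 0 be real, let d : Fin N → ℝ, and set A = σ·D² and B = D·(diag(d) − σ·I)·D. Then there exist a real number μ and a nonzero vector v ∈ ℂ^N with Σ_j v_j = 0 such that B·v = μ·((−A)·v) and μ ≥ 1 − σ⁻¹·d2min, where d2min = min_{i≠j} max(d_i, d_j) is the second-smallest entry of d counted with multiplicity. (This is the lower bound 1 − σ⁻¹ d_{2,min} ≤ μ_max on the largest generalized eigenvalue in part 2 of Proposition 1.) -/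
open Matrix InnerProductSpace RCLike

/-!
Write `𝟙` for the all-ones vector. If `w = D v` and `diag(d) w = μ w + c 𝟙`, then, as `D 𝟙 = 0`,
`B v = (μ - σ) D w` and `-A v = -σ D w`, so `1 - σ⁻¹ μ` is a generalized eigenvalue.
A suitable `μ` is the smallest eigenvalue of the compression of `diag(d)` to the mean-zero
hyperplane `𝟙ᗮ`: its eigenvectors `w` satisfy `diag(d) w - μ w ∈ 𝟙ᗮᗮ = span 𝟙`, and testing the
Rayleigh quotient on `e_a - e_b` gives `μ ≤ (d_a + d_b) / 2 ≤ max (d_a, d_b)`. Finally, `D` maps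
onto `𝟙ᗮ` because `Dᴴ = -D` makes `𝟙ᴴ D = 0` and `ker D` is one-dimensional, and the preimage
`v` of `w` can be shifted along `𝟙` to have mean zero.
-/

namespace LinearMap.IsSymmetric

open Module End

variable {𝕜 E : Type*} [RCLike 𝕜] [NormedAddCommGroup E] [InnerProductSpace 𝕜 E]
  [FiniteDimensional 𝕜 E] {T : E →ₗ[𝕜] E}

theorem exists_hasEigenvector_mul_norm_sq_le (hT : T.IsSymmetric) {x : E} (hx : x ≠ 0) :
    ∃ (μ : ℝ) (w : E), HasEigenvector T μ w ∧ μ * ‖x‖ ^ 2 ≤ re ⟪T x, x⟫_𝕜 := by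
  have : Nontrivial E := ⟨⟨x, 0, hx⟩⟩
  have hbdd : BddBelow (Set.range fun y : { y : E // y ≠ 0 } =>
      re ⟪T y, y⟫_𝕜 / ‖(y : E)‖ ^ 2) := by
    refine ⟨-‖LinearMap.toContinuousLinearMap T‖, ?_⟩
    rintro _ ⟨y, rfl⟩
    exact (abs_le.mp ((LinearMap.toContinuousLinearMap T).rayleighQuotient_le_norm y)).1
  obtain ⟨w, hw⟩ := hT.hasEigenvalue_iInf_of_finiteDimensional.exists_hasEigenvector
  refine ⟨_, w, hw, ?_⟩
  rw [← le_div_iff₀ (by positivity)]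
  exact ciInf_le hbdd ⟨x, hx⟩

/-- `T w - μ w ∈ Kᗮ` says that `w` is an eigenvector of the compression of `T` to `K`. -/
theorem exists_mem_sub_smul_mem_orthogonal (hT : T.IsSymmetric) (K : Submodule 𝕜 E)
    {x : E} (hxK : x ∈ K) (hx : x ≠ 0) :
    ∃ (μ : ℝ) (w : E), w ∈ K ∧ w ≠ 0 ∧ T w - (μ : 𝕜) • w ∈ Kᗮ ∧
      μ * ‖x‖ ^ 2 ≤ re ⟪T x, x⟫_𝕜 := by
  obtain ⟨μ, w, ⟨hwμ, hw0⟩, hle⟩ :=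
    (hT.adjoint_conj K.subtype).exists_hasEigenvector_mul_norm_sq_le (x := ⟨x, hxK⟩)
      (by simpa using hx)
  refine ⟨μ, w, w.2, by simpa using hw0, ?_, by simpa [adjoint_inner_left] using hle⟩
  rw [Submodule.mem_orthogonal]
  intro y hy
  have := congrArg (fun z : K => ⟪(⟨y, hy⟩ : K), z⟫_𝕜) (mem_eigenspace_iff.mp hwμ)
  simpa [adjoint_inner_right, inner_sub_right, inner_smul_right, sub_eq_zero] using this

end LinearMap.IsSymmetric

open WithLp in
theorem exists_diagonal_mulVec_eq_smul_add_const {n : Type*} [Fintype n] [DecidableEq n]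
    (d : n → ℝ) {a b : n} (hab : a ≠ b) :
    ∃ (μ : ℝ) (c : ℂ) (w : n → ℂ), w ≠ 0 ∧ ∑ j, w j = 0 ∧
      diagonal (fun j => (d j : ℂ)) *ᵥ w = (μ : ℂ) • w + c • 1 ∧ 2 * μ ≤ d a + d b := by
  set T := toEuclideanLin (diagonal fun j => (d j : ℂ))
  have hT : T.IsSymmetric := isSymmetric_toEuclideanLin_iff.mpr <|
    isHermitian_diagonal_iff.mpr fun i => Complex.conj_ofReal (d i)
  set one : EuclideanSpace ℂ n := toLp 2 1
  set x := EuclideanSpace.single a (1 : ℂ) - EuclideanSpace.single b 1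
  have hxK : x ∈ (ℂ ∙ one)ᗮ := by
    rw [Submodule.mem_orthogonal_singleton_iff_inner_right]
    simp [x, one, inner_sub_right, EuclideanSpace.inner_single_right]
  have hx : x ≠ 0 := fun h => by
    simpa [x, hab] using congrArg (fun y : EuclideanSpace ℂ n => y a) h
  obtain ⟨μ, w, hwK, hw0, hwc, hle⟩ := hT.exists_mem_sub_smul_mem_orthogonal _ hxK hx
  rw [Submodule.orthogonal_orthogonal, Submodule.mem_span_singleton] at hwc
  obtain ⟨c, hc⟩ := hwc
  refine ⟨μ, c, ofLp w, by simpa using hw0, ?_, ?_, ?_⟩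
  · rw [Submodule.mem_orthogonal_singleton_iff_inner_right] at hwK
    simpa [one, EuclideanSpace.inner_eq_star_dotProduct, dotProduct_one] using hwK
  · have hc' := congrArg ofLp hc
    rw [ofLp_smul, ofLp_sub, ofLp_smul, toLpLin_apply] at hc'
    rw [show (1 : n → ℂ) = ofLp one from rfl, hc']
    exact (add_sub_cancel _ _).symm
  · have hnorm : ‖x‖ ^ 2 = 2 := by
      rw [EuclideanSpace.norm_sq_eq,
        Fintype.sum_eq_add a b hab fun k hk => by simp [x, hk.1, hk.2]]
      norm_num [x, hab, hab.symm]
    have hray : re ⟪T x, x⟫_ℂ = d a + d b := by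
      simp [T, x, EuclideanSpace.inner_single_right, hab, hab.symm]
    rw [hnorm, hray] at hle
    linarith

namespace Matrix

variable {n : Type*} [Fintype n]

theorem star_vecMul_eq_zero_of_conjTranspose_eq_neg {R : Type*} [Ring R] [StarRing R]
    {D : Matrix n n R} (hD : Dᴴ = -D) {v : n → R} (hv : D *ᵥ v = 0) : star v ᵥ* D = 0 := by
  have := star_mulVec D v
  rw [hv, hD, vecMul_neg, star_zero] at this
  exact neg_eq_zero.mp this.symm

variable {K : Type*} [Field K] [DecidableEq n]

theorem mul_sub_smul_one_mul_mulVec_eq {D Λ : Matrix n n K} {v : n → K} {μ σ c : K}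
    (hσ : σ ≠ 0) (hD : D *ᵥ 1 = 0) (hΛ : Λ *ᵥ (D *ᵥ v) = μ • D *ᵥ v + c • 1) :
    (D * (Λ - σ • 1) * D) *ᵥ v = (1 - σ⁻¹ * μ) • (-(σ • (D * D))) *ᵥ v := by
  set w := D *ᵥ v
  have hB : (D * (Λ - σ • 1) * D) *ᵥ v = (μ - σ) • D *ᵥ w := by
    rw [← mulVec_mulVec, ← mulVec_mulVec, sub_mulVec, hΛ, smul_mulVec, one_mulVec,
      add_sub_right_comm, ← sub_smul, mulVec_add, mulVec_smul, mulVec_smul, hD, smul_zero, add_zero]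
  have hA : (-(σ • (D * D))) *ᵥ v = -σ • D *ᵥ w := by
    rw [neg_mulVec, smul_mulVec, ← mulVec_mulVec, neg_smul]
  rw [hB, hA, smul_smul]
  congr 1
  field_simp
  ring

variable [Nonempty n] {M : Matrix n n K}

theorem range_mulVecLin_eq_ker_dotProduct_one
    (hker : LinearMap.ker M.mulVecLin = Submodule.span K {1}) (hM : 1 ᵥ* M = 0) :
    LinearMap.range M.mulVecLin = LinearMap.ker (dotProductEquiv K n 1) := by
  have hle : LinearMap.range M.mulVecLin ≤ LinearMap.ker (dotProductEquiv K n 1) := by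
    rintro _ ⟨v, rfl⟩
    simp [dotProduct_mulVec, hM]
  have hsurj : Function.Surjective (dotProductEquiv K n 1) := fun c =>
    ⟨Pi.single (Classical.arbitrary n) c, by simp⟩
  have h₁ := LinearMap.finrank_range_add_finrank_ker M.mulVecLin
  have h₂ := LinearMap.finrank_range_add_finrank_ker (dotProductEquiv K n 1)
  rw [hker, finrank_span_singleton one_ne_zero] at h₁
  rw [LinearMap.range_eq_top.mpr hsurj, finrank_top, Module.finrank_self] at h₂
  exact Submodule.eq_of_le_of_finrank_eq hle (by omega)

theorem exists_sum_eq_zero_mulVec_eq [CharZero K]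
    (hker : LinearMap.ker M.mulVecLin = Submodule.span K {1}) (hM : 1 ᵥ* M = 0)
    {w : n → K} (hw : ∑ j, w j = 0) : ∃ v : n → K, ∑ j, v j = 0 ∧ M *ᵥ v = w := by
  obtain ⟨v, rfl⟩ : w ∈ LinearMap.range M.mulVecLin := by
    rw [range_mulVecLin_eq_ker_dotProduct_one hker hM, LinearMap.mem_ker,
      dotProductEquiv_apply_apply, one_dotProduct, hw]
  have hM1 : M *ᵥ 1 = 0 := by
    simpa using hker.ge (Submodule.mem_span_singleton_self 1)
  have hn : (Fintype.card n : K) ≠ 0 := Nat.cast_ne_zero.mpr Fintype.card_ne_zero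
  refine ⟨v - ((∑ j, v j) / Fintype.card n) • 1, ?_, ?_⟩
  · simp [Finset.sum_sub_distrib, mul_div_cancel₀ _ hn]
  · simp [mulVec_sub, mulVec_smul, hM1]

end Matrix

/-- Proposition 1, part 2 (lower bound on the largest generalized eigenvalue):
for the splitting `A = σ D²`, `B = D (diag d − σ I) D` with `Dᴴ = −D` and
`ker D = span{𝟙}`, there is a real generalized eigenvalue `μ` on the
mean-zero subspace with `μ ≥ 1 − σ⁻¹ d_{2,min}`, where `d_{2,min}` is the
second-smallest entry of `d` (with multiplicity). -/
theorem stmt2 (N : ℕ) (hN : 2 ≤ N)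
    (D : Matrix (Fin N) (Fin N) ℂ) (hD : D.conjTranspose = -D)
    (hker : LinearMap.ker D.mulVecLin =
      Submodule.span ℂ {(fun _ => 1 : Fin N → ℂ)})
    (σ : ℝ) (hσ : 0 < σ) (d : Fin N → ℝ)
    (d2min : ℝ)
    (hd2min : IsLeast {x : ℝ | ∃ i j : Fin N, i ≠ j ∧ x = max (d i) (d j)} d2min)
    (A B : Matrix (Fin N) (Fin N) ℂ)
    (hA : A = (σ : ℂ) • (D * D))
    (hB : B = D * (Matrix.diagonal (fun j => (d j : ℂ)) - (σ : ℂ) • 1) * D) :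
    ∃ (μ : ℝ) (v : Fin N → ℂ), v ≠ 0 ∧ (∑ j, v j) = 0 ∧
      B.mulVec v = (μ : ℂ) • (-A).mulVec v ∧
      1 - σ⁻¹ * d2min ≤ μ := by
  have : Nonempty (Fin N) := ⟨⟨0, by omega⟩⟩
  obtain ⟨a, b, hab, hd2⟩ := hd2min.1
  obtain ⟨μ, c, w, hw0, hwsum, hdw, hμ⟩ := exists_diagonal_mulVec_eq_smul_add_const d hab
  have hD1 : D *ᵥ 1 = 0 := hker.ge (Submodule.mem_span_singleton_self _)
  have h1D : 1 ᵥ* D = 0 := by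
    simpa using star_vecMul_eq_zero_of_conjTranspose_eq_neg hD hD1
  obtain ⟨v, hvsum, rfl⟩ := exists_sum_eq_zero_mulVec_eq hker h1D hwsum
  refine ⟨1 - σ⁻¹ * μ, v, fun hv => hw0 (by simp [hv]), hvsum, ?_, ?_⟩
  · rw [hA, hB, mul_sub_smul_one_mul_mulVec_eq (by exact_mod_cast hσ.ne') hD1 hdw]
    push_cast
    rfl
  · have : μ ≤ d2min := by
      rw [hd2]
      linarith [le_max_left (d a) (d b), le_max_right (d a) (d b)]
    linarith [mul_le_mul_of_nonneg_left this (inv_nonneg.mpr hσ.le)]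
end

section
/- Let N ≥ 2, let D be an N×N complex matrix with Dᴴ = −D whose kernel (as a linear map on ℂ^N) is exactly the complex span of the all-ones vector 𝟙, let σ > 0 be real, let d : Fin N → ℝ, and set A = σ·D² and B = D·(diag(d) − σ·I)·D. Then there exist a real number μ and a nonzero vector v ∈ ℂ^N with Σ_j v_j = 0 such that B·v = μ·((−A)·v) and μ ≤ 1 − σ⁻¹·d2max, where d2max = max_{i≠j} min(d_i, d_j) is the second-largest entry of d counted with multiplicity. (This is the upper bound μ_min ≤ 1 − σ⁻¹ d_{2,max} on the smallest generalized eigenvalue in part 2 of Proposition 1.) -/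
/-!
Writing `w = D v`, the equation `B v = μ (-A) v` reads `D ((diagonal d - σ + μ σ) w) = 0`, i.e.
`(diagonal d) w = (1 - μ) σ w + c 𝟙`, and since `D` is skew-Hermitian with kernel `ℂ 𝟙`, its range
is exactly the mean-zero subspace `𝟙ᗮ`. So it suffices to find a mean-zero eigenvector `w` of the
compression `P (diagonal d) P` of `diagonal d` to `𝟙ᗮ` (`P = I - J/N`) with eigenvalue `λ ≥ d2max`,
and to take `μ = 1 - λ / σ`. For `i ≠ j` with `d2max = min (d i) (d j)`, the top
eigenvector of `P (diagonal d) P + s (I - P)` with `s < (d i + d j) / 2` does this: testing the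
Rayleigh quotient on `eᵢ - eⱼ` bounds its eigenvalue below by `(d i + d j) / 2 > s`, and `s` is the
eigenvalue of `𝟙`, so the top eigenvector is orthogonal to `𝟙`.
-/

open Matrix
open scoped ComplexOrder

namespace Matrix

variable {𝕜 n : Type*} [RCLike 𝕜] [Fintype n]

theorem IsHermitian.dotProduct_eq_zero_of_mulVec_eq_smul {M : Matrix n n 𝕜} (hM : M.IsHermitian)
    {u w : n → 𝕜} {a b : ℝ} (hu : M *ᵥ u = (a : 𝕜) • u) (hw : M *ᵥ w = (b : 𝕜) • w)
    (hab : a ≠ b) : star w ⬝ᵥ u = 0 := by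
  have h : (a : 𝕜) * (star w ⬝ᵥ u) = b * (star w ⬝ᵥ u) :=
    calc (a : 𝕜) * (star w ⬝ᵥ u) = star w ⬝ᵥ (M *ᵥ u) := by rw [hu, dotProduct_smul, smul_eq_mul]
      _ = star (M *ᵥ w) ⬝ᵥ u := by rw [dotProduct_mulVec, star_mulVec, hM.eq]
      _ = b * (star w ⬝ᵥ u) := by
        rw [hw, star_smul, smul_dotProduct, RCLike.star_def, RCLike.conj_ofReal, smul_eq_mul]
  exact (mul_eq_mul_right_iff.mp h).resolve_left (by exact_mod_cast hab)

theorem sum_mulVec_eq_zero_of_conjTranspose_eq_neg {D : Matrix n n 𝕜} (hD : Dᴴ = -D)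
    (hD1 : D *ᵥ 1 = 0) (x : n → 𝕜) : ∑ i, (D *ᵥ x) i = 0 := by
  have h : (1 : n → 𝕜) ᵥ* D = 0 := by
    rw [← star_one, ← conjTranspose_conjTranspose D, ← star_mulVec, hD, neg_mulVec, hD1]
    simp
  simpa [dotProduct_mulVec, h] using (one_dotProduct (D *ᵥ x)).symm

theorem mulVec_one_eq_zero_of_ker_eq {D : Matrix n n 𝕜}
    (hker : LinearMap.ker D.mulVecLin = Submodule.span 𝕜 {1}) : D *ᵥ 1 = 0 :=
  LinearMap.mem_ker.mp (hker.ge (Submodule.mem_span_singleton_self 1))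

theorem range_mulVecLin_eq_ker_sum [Nonempty n] {D : Matrix n n 𝕜} (hD : Dᴴ = -D)
    (hker : LinearMap.ker D.mulVecLin = Submodule.span 𝕜 {1}) :
    LinearMap.range D.mulVecLin = LinearMap.ker (Fintype.linearCombination 𝕜 (1 : n → 𝕜)) := by
  set f := Fintype.linearCombination 𝕜 (1 : n → 𝕜)
  have hf : ∀ x, f x = ∑ i, x i := fun x => by simp [f, Fintype.linearCombination_apply]
  have hle : LinearMap.range D.mulVecLin ≤ LinearMap.ker f := by
    rintro _ ⟨x, rfl⟩
    simpa [hf] using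
      sum_mulVec_eq_zero_of_conjTranspose_eq_neg hD (mulVec_one_eq_zero_of_ker_eq hker) x
  have hf0 : f ≠ 0 := fun h => by simpa [hf, Finset.card_univ] using LinearMap.congr_fun h 1
  have hrank := LinearMap.finrank_range_add_finrank_ker D.mulVecLin
  have hkerf := Module.Dual.finrank_ker_add_one_of_ne_zero hf0
  rw [hker, finrank_span_singleton one_ne_zero] at hrank
  exact Submodule.eq_of_le_of_finrank_eq hle (by omega)

variable [DecidableEq n]

theorem IsHermitian.dotProduct_mulVec_le {M : Matrix n n 𝕜} (hM : M.IsHermitian) {c : ℝ}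
    (hc : ∀ i, hM.eigenvalues i ≤ c) (x : n → 𝕜) :
    star x ⬝ᵥ (M *ᵥ x) ≤ c * (star x ⬝ᵥ x) := by
  have hpos : (algebraMap 𝕜 _ (c : 𝕜) - M).PosSemidef := by
    refine posSemidef_iff_isHermitian_and_spectrum_nonneg.mpr ⟨?_, ?_⟩
    · exact IsSelfAdjoint.sub (IsSelfAdjoint.algebraMap _ (RCLike.conj_ofReal c)) hM
    · rw [← spectrum.singleton_sub_eq, hM.spectrum_eq_image_range]
      rintro _ ⟨_, rfl, _, ⟨_, ⟨i, rfl⟩, rfl⟩, rfl⟩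
      change 0 ≤ (c : 𝕜) - hM.eigenvalues i
      rw [← RCLike.ofReal_sub, RCLike.ofReal_nonneg, sub_nonneg]
      exact hc i
  have h := hpos.dotProduct_mulVec_nonneg x
  rwa [sub_mulVec, dotProduct_sub, sub_nonneg, Algebra.algebraMap_eq_smul_one, smul_mulVec,
    one_mulVec, dotProduct_smul, smul_eq_mul] at h

theorem IsHermitian.exists_mulVec_eq_smul_forall_dotProduct_mulVec_le [Nonempty n]
    {M : Matrix n n 𝕜} (hM : M.IsHermitian) :
    ∃ (l : ℝ) (u : n → 𝕜), u ≠ 0 ∧ M *ᵥ u = (l : 𝕜) • u ∧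
      ∀ x, star x ⬝ᵥ (M *ᵥ x) ≤ l * (star x ⬝ᵥ x) := by
  obtain ⟨i, hi⟩ := Finite.exists_max hM.eigenvalues
  refine ⟨hM.eigenvalues i, hM.eigenvectorBasis i, ?_, ?_, hM.dotProduct_mulVec_le hi⟩
  · simpa using hM.eigenvectorBasis.orthonormal.ne_zero i
  · rw [hM.mulVec_eigenvectorBasis, RCLike.real_smul_eq_coe_smul (K := 𝕜)]

def centeringMatrix (n 𝕜 : Type*) [Fintype n] [DecidableEq n] [RCLike 𝕜] : Matrix n n 𝕜 :=
  1 - (Fintype.card n : 𝕜)⁻¹ • of fun _ _ => 1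

theorem centeringMatrix_mulVec (x : n → 𝕜) :
    centeringMatrix n 𝕜 *ᵥ x = x - ((Fintype.card n : 𝕜)⁻¹ * ∑ i, x i) • 1 := by
  rw [centeringMatrix, sub_mulVec, one_mulVec, smul_mulVec, ← smul_smul]
  congr 2
  ext i
  simp [mulVec, dotProduct]

theorem isHermitian_centeringMatrix : (centeringMatrix n 𝕜).IsHermitian := by
  refine (isHermitian_one (α := 𝕜)).sub (IsHermitian.smul ?_ ?_)
  · ext i j; simp
  · simp [IsSelfAdjoint]

theorem centeringMatrix_mulVec_of_sum_eq_zero {x : n → 𝕜} (hx : ∑ i, x i = 0) :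
    centeringMatrix n 𝕜 *ᵥ x = x := by
  simp [centeringMatrix_mulVec, hx]

theorem sum_centeringMatrix_mulVec [Nonempty n] (x : n → 𝕜) :
    ∑ i, (centeringMatrix n 𝕜 *ᵥ x) i = 0 := by
  simp [centeringMatrix_mulVec, Finset.sum_sub_distrib, Finset.card_univ]

theorem centeringMatrix_mulVec_one [Nonempty n] : centeringMatrix n 𝕜 *ᵥ 1 = 0 := by
  simp [centeringMatrix_mulVec, Finset.card_univ]

theorem exists_sum_eq_zero_mulVec_eq_s3 [Nonempty n] {D : Matrix n n 𝕜} (hD : Dᴴ = -D)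
    (hker : LinearMap.ker D.mulVecLin = Submodule.span 𝕜 {1}) {u : n → 𝕜}
    (hu : ∑ i, u i = 0) : ∃ v, ∑ i, v i = 0 ∧ D *ᵥ v = u := by
  obtain ⟨v, rfl⟩ : u ∈ LinearMap.range D.mulVecLin := by
    rw [range_mulVecLin_eq_ker_sum hD hker, LinearMap.mem_ker]
    simpa [Fintype.linearCombination_apply] using hu
  refine ⟨centeringMatrix n 𝕜 *ᵥ v, sum_centeringMatrix_mulVec v, ?_⟩
  simp [centeringMatrix_mulVec, mulVec_sub, mulVec_smul, mulVec_one_eq_zero_of_ker_eq hker]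

def compressedDiagonal (d : n → ℝ) (s : ℝ) : Matrix n n 𝕜 :=
  centeringMatrix n 𝕜 * diagonal (fun i => (d i : 𝕜)) * centeringMatrix n 𝕜 +
    (s : 𝕜) • (1 - centeringMatrix n 𝕜)

section compressedDiagonal

variable (d : n → ℝ) (s : ℝ)

theorem isHermitian_compressedDiagonal : (compressedDiagonal (𝕜 := 𝕜) d s).IsHermitian := by
  have hC := isHermitian_centeringMatrix (n := n) (𝕜 := 𝕜)
  refine IsHermitian.add ?_ ((isHermitian_one.sub hC).smul (RCLike.conj_ofReal s))
  simpa only [hC.eq] using isHermitian_mul_mul_conjTranspose (centeringMatrix n 𝕜)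
    (isHermitian_diagonal_of_self_adjoint _ (funext fun i => RCLike.conj_ofReal (d i)))

theorem compressedDiagonal_mulVec_one [Nonempty n] :
    compressedDiagonal d s *ᵥ (1 : n → 𝕜) = (s : 𝕜) • 1 := by
  rw [compressedDiagonal, add_mulVec, smul_mulVec, sub_mulVec, ← mulVec_mulVec,
    centeringMatrix_mulVec_one]
  simp

theorem compressedDiagonal_mulVec_of_sum_eq_zero {x : n → 𝕜} (hx : ∑ i, x i = 0) :
    compressedDiagonal d s *ᵥ x =
      centeringMatrix n 𝕜 *ᵥ (diagonal (fun i => (d i : 𝕜)) *ᵥ x) := by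
  rw [compressedDiagonal, add_mulVec, smul_mulVec, sub_mulVec, ← mulVec_mulVec, ← mulVec_mulVec,
    centeringMatrix_mulVec_of_sum_eq_zero hx]
  simp

theorem dotProduct_compressedDiagonal_mulVec_of_sum_eq_zero {x : n → 𝕜} (hx : ∑ i, x i = 0) :
    star x ⬝ᵥ (compressedDiagonal d s *ᵥ x) =
      star x ⬝ᵥ (diagonal (fun i => (d i : 𝕜)) *ᵥ x) := by
  rw [compressedDiagonal_mulVec_of_sum_eq_zero d s hx, dotProduct_mulVec,
    ← isHermitian_centeringMatrix.eq, ← star_mulVec, centeringMatrix_mulVec_of_sum_eq_zero hx]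

end compressedDiagonal

theorem exists_sum_eq_zero_diagonal_mulVec_eq (d : n → ℝ) {i j : n} (hij : i ≠ j) :
    ∃ (l : ℝ) (u : n → 𝕜) (c : 𝕜), u ≠ 0 ∧ ∑ k, u k = 0 ∧
      diagonal (fun k => (d k : 𝕜)) *ᵥ u = (l : 𝕜) • u + c • 1 ∧ (d i + d j) / 2 ≤ l := by
  have : Nonempty n := ⟨i⟩
  set s : ℝ := (d i + d j) / 2 - 1
  have hM := isHermitian_compressedDiagonal (𝕜 := 𝕜) d s
  obtain ⟨l, u, hu0, hMu, hmax⟩ := hM.exists_mulVec_eq_smul_forall_dotProduct_mulVec_le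
  set x : n → 𝕜 := Pi.single i 1 - Pi.single j 1
  have hx : ∑ k, x k = 0 := by simp [x, Finset.sum_sub_distrib]
  have hxdx : star x ⬝ᵥ (diagonal (fun k => (d k : 𝕜)) *ᵥ x) = ((d i + d j : ℝ) : 𝕜) := by
    simp [x, mulVec_sub, dotProduct_sub, hij, hij.symm]
  have hxx : star x ⬝ᵥ x = 2 := by
    simp [x, dotProduct_sub, hij, hij.symm, one_add_one_eq_two]
  have hl : (d i + d j) / 2 ≤ l := by
    have h := hmax x
    rw [dotProduct_compressedDiagonal_mulVec_of_sum_eq_zero d s hx, hxdx, hxx] at h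
    have h' : d i + d j ≤ l * 2 := by exact_mod_cast h
    linarith
  have hu : ∑ k, u k = 0 := by
    have h := hM.dotProduct_eq_zero_of_mulVec_eq_smul hMu (compressedDiagonal_mulVec_one d s)
      (by simp only [s]; linarith)
    simpa [dotProduct] using h
  refine ⟨l, u, (Fintype.card n : 𝕜)⁻¹ * ∑ k, (diagonal (fun k => (d k : 𝕜)) *ᵥ u) k,
    hu0, hu, ?_, hl⟩
  rw [← hMu, compressedDiagonal_mulVec_of_sum_eq_zero d s hu, centeringMatrix_mulVec]
  abel

end Matrix

theorem stmt3_general (N : ℕ)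
    (D : Matrix (Fin N) (Fin N) ℂ) (hD : D.conjTranspose = -D)
    (hker : LinearMap.ker D.mulVecLin =
      Submodule.span ℂ {(fun _ => 1 : Fin N → ℂ)})
    (σ : ℝ) (hσ : 0 < σ) (d : Fin N → ℝ)
    (d2max : ℝ)
    (hd2max : IsGreatest {x : ℝ | ∃ i j : Fin N, i ≠ j ∧ x = min (d i) (d j)} d2max)
    (A B : Matrix (Fin N) (Fin N) ℂ)
    (hA : A = (σ : ℂ) • (D * D))
    (hB : B = D * (Matrix.diagonal (fun j => (d j : ℂ)) - (σ : ℂ) • 1) * D) :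
    ∃ (μ : ℝ) (v : Fin N → ℂ), v ≠ 0 ∧ (∑ j, v j) = 0 ∧
      B.mulVec v = (μ : ℂ) • (-A).mulVec v ∧
      μ ≤ 1 - σ⁻¹ * d2max := by
  obtain ⟨i, j, hij, rfl⟩ := hd2max.1
  have : Nonempty (Fin N) := ⟨i⟩
  obtain ⟨l, u, c, hu0, hu, hdu, hl⟩ := exists_sum_eq_zero_diagonal_mulVec_eq (𝕜 := ℂ) d hij
  obtain ⟨v, hv, hDv⟩ := exists_sum_eq_zero_mulVec_eq_s3 hD hker hu
  replace hdu : diagonal (fun k => (d k : ℂ)) *ᵥ u = (l : ℂ) • u + c • 1 := hdu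
  have hD1 : D *ᵥ 1 = 0 := mulVec_one_eq_zero_of_ker_eq hker
  refine ⟨1 - σ⁻¹ * l, v, ?_, hv, ?_, ?_⟩
  · rintro rfl
    exact hu0 (by simpa using hDv.symm)
  · calc B *ᵥ v = D *ᵥ (diagonal (fun k => (d k : ℂ)) *ᵥ u - (σ : ℂ) • u) := by
          rw [hB, ← mulVec_mulVec, ← mulVec_mulVec, hDv, sub_mulVec, smul_mulVec, one_mulVec]
      _ = ((l : ℂ) - σ) • (D *ᵥ u) := by
          rw [hdu, mulVec_sub, mulVec_add, mulVec_smul, mulVec_smul, mulVec_smul, hD1]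
          module
      _ = ((1 - σ⁻¹ * l : ℝ) : ℂ) • (-A) *ᵥ v := by
          rw [hA, neg_mulVec, smul_mulVec, ← mulVec_mulVec, hDv, smul_neg, smul_smul, ← neg_smul]
          congr 1
          push_cast
          field_simp
          ring
  · have hmin : min (d i) (d j) ≤ l := by
      linarith [min_le_left (d i) (d j), min_le_right (d i) (d j)]
    gcongr

/-- Proposition 1, part 2 (upper bound on the smallest generalized eigenvalue):
for the splitting `A = σ D²`, `B = D (diag d − σ I) D` with `Dᴴ = −D` and
`ker D = span{𝟙}`, there is a real generalized eigenvalue `μ` on the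
mean-zero subspace with `μ ≤ 1 − σ⁻¹ d_{2,max}`, where `d_{2,max}` is the
second-largest entry of `d` (with multiplicity). -/
theorem stmt3 (N : ℕ) (hN : 2 ≤ N)
    (D : Matrix (Fin N) (Fin N) ℂ) (hD : D.conjTranspose = -D)
    (hker : LinearMap.ker D.mulVecLin =
      Submodule.span ℂ {(fun _ => 1 : Fin N → ℂ)})
    (σ : ℝ) (hσ : 0 < σ) (d : Fin N → ℝ)
    (d2max : ℝ)
    (hd2max : IsGreatest {x : ℝ | ∃ i j : Fin N, i ≠ j ∧ x = min (d i) (d j)} d2max)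
    (A B : Matrix (Fin N) (Fin N) ℂ)
    (hA : A = (σ : ℂ) • (D * D))
    (hB : B = D * (Matrix.diagonal (fun j => (d j : ℂ)) - (σ : ℂ) • 1) * D) :
    ∃ (μ : ℝ) (v : Fin N → ℂ), v ≠ 0 ∧ (∑ j, v j) = 0 ∧
      B.mulVec v = (μ : ℂ) • (-A).mulVec v ∧
      μ ≤ 1 - σ⁻¹ * d2max :=
  stmt3_general N D hD hker σ hσ d d2max hd2max A B hA hB
end

section
/- Let N ≥ 1, let c : Fin N → ℝ, and let μ ∈ ℝ be such that c_j ≠ μ for every j. Then the following are equivalent: (i) there exists a nonzero vector y ∈ ℂ^N with Σ_j y_j = 0 and a scalar α ∈ ℂ such that (c_j − μ)·y_j = α for every j; (ii) Σ_j (c_j − μ)⁻¹ = 0. (This is the secular-equation reduction used in the proof of Proposition 1: the constrained problem (S − μ·I)y = α·𝟙, 𝟙ᵀy = 0 with S = diag(c) has a nontrivial solution exactly when g(μ) = Σ_j (c_j − μ)⁻¹ vanishes.) -/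
section SecularEquation

variable {ι K : Type*} [Fintype ι] [Field K] {d : ι → K}

/-- Every solution is `y = α • d⁻¹`, and `α ≠ 0` when `y ≠ 0`. -/
theorem exists_ne_zero_sum_eq_zero_mul_eq_const_iff [Nonempty ι] (hd : ∀ j, d j ≠ 0) :
    (∃ y : ι → K, y ≠ 0 ∧ ∑ j, y j = 0 ∧ ∃ α : K, ∀ j, d j * y j = α) ↔
      ∑ j, (d j)⁻¹ = 0 := by
  constructor
  · rintro ⟨y, hy, hsum, α, hα⟩
    have hy_eq : ∀ j, y j = α * (d j)⁻¹ := fun j => by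
      rw [← hα j, mul_comm, inv_mul_cancel_left₀ (hd j)]
    have hα_ne : α ≠ 0 := by
      rintro rfl
      exact hy (funext fun j => by simp [hy_eq j])
    rw [Finset.sum_congr rfl fun j _ => hy_eq j, ← Finset.mul_sum] at hsum
    exact (mul_eq_zero.mp hsum).resolve_left hα_ne
  · intro hg
    refine ⟨fun j => (d j)⁻¹, fun h => ?_, hg, 1, fun j => mul_inv_cancel₀ (hd j)⟩
    obtain ⟨j⟩ := ‹Nonempty ι›
    exact inv_ne_zero (hd j) (congrFun h j)

end SecularEquation

/-- Secular-equation reduction from the proof of Proposition 1: the constrained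
problem `(diag c − μ I) y = α 𝟙`, `𝟙ᵀ y = 0` has a nontrivial solution `y ≠ 0`
exactly when `g(μ) = Σ_j (c_j − μ)⁻¹ = 0` (assuming `μ` avoids all `c_j`). -/
theorem stmt4 (N : ℕ) (hN : 1 ≤ N) (c : Fin N → ℝ) (μ : ℝ)
    (hμ : ∀ j, c j ≠ μ) :
    (∃ y : Fin N → ℂ, y ≠ 0 ∧ (∑ j, y j) = 0 ∧
      ∃ α : ℂ, ∀ j, ((c j : ℂ) - (μ : ℂ)) * y j = α) ↔
    (∑ j, (c j - μ)⁻¹) = 0 := by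
  have : Nonempty (Fin N) := ⟨⟨0, hN⟩⟩
  have hd : ∀ j, (c j : ℂ) - μ ≠ 0 := fun j => sub_ne_zero.mpr (mod_cast hμ j)
  rw [exists_ne_zero_sum_eq_zero_mul_eq_const_iff hd]
  exact_mod_cast Iff.rfl
end

section
/- Let N ≥ 1 and let c : Fin N → ℝ be non-constant. Let a = min_j c_j and let b be the minimum of the (nonempty) set { c_j : c_j > a }, i.e., the smallest value of c strictly greater than a. Then there exists a real number μ with a < μ < b such that Σ_j (c_j − μ)⁻¹ = 0. (This is the interlacing claim in the proof of Proposition 1: ordering the poles of g(μ) = Σ_j (c_j − μ)⁻¹ along the real axis, there is at least one root of g between the smallest two distinct pole locations.) -/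
/-!
The function `g μ = ∑ j, (c j - μ)⁻¹` is continuous away from the values of `c`, and at each
value `p` the terms with `c j = p` make it tend to `-∞` just right of `p` and to `+∞` just left of
`p`, the remaining terms staying bounded. On a gap `(p, q)` between consecutive values `g`
therefore runs from `-∞` to `+∞`, and it vanishes somewhere by the intermediate value theorem.
-/

open Filter Topology Set Finset

lemma tendsto_inv_sub_nhdsGT (p : ℝ) : Tendsto (fun μ : ℝ => (p - μ)⁻¹) (𝓝[>] p) atBot := by
  refine tendsto_inv_nhdsLT_zero.comp (tendsto_nhdsWithin_iff.2 ⟨?_, ?_⟩)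
  · simpa using ((continuous_sub_left p).tendsto p).mono_left nhdsWithin_le_nhds
  · filter_upwards [self_mem_nhdsWithin] with μ (hμ : p < μ)
    exact sub_neg.2 hμ

lemma tendsto_inv_sub_nhdsLT (p : ℝ) : Tendsto (fun μ : ℝ => (p - μ)⁻¹) (𝓝[<] p) atTop := by
  refine tendsto_inv_nhdsGT_zero.comp (tendsto_nhdsWithin_iff.2 ⟨?_, ?_⟩)
  · simpa using ((continuous_sub_left p).tendsto p).mono_left nhdsWithin_le_nhds
  · filter_upwards [self_mem_nhdsWithin] with μ (hμ : μ < p)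
    exact sub_pos.2 hμ

section

variable {ι : Type*} [Fintype ι] (c : ι → ℝ)

lemma sum_inv_sub_eq_card_mul_add (p μ : ℝ) :
    ∑ j, (c j - μ)⁻¹
      = #{j | c j = p} * (p - μ)⁻¹ + ∑ j with c j ≠ p, (c j - μ)⁻¹ := by
  rw [← sum_filter_add_sum_filter_not univ (c · = p), sum_congr rfl fun j hj => by
    rw [(mem_filter.1 hj).2], sum_const, nsmul_eq_mul]

lemma tendsto_sum_inv_sub_of_ne (p : ℝ) {l : Filter ℝ} (hl : l ≤ 𝓝 p) :
    Tendsto (fun μ => ∑ j with c j ≠ p, (c j - μ)⁻¹) l (𝓝 (∑ j with c j ≠ p, (c j - p)⁻¹)) := by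
  refine (tendsto_finsetSum _ fun j hj => ?_).mono_left hl
  exact ((continuous_sub_left (c j)).tendsto p).inv₀ (sub_ne_zero.2 (mem_filter.1 hj).2)

lemma tendsto_sum_inv_sub_nhdsGT {p : ℝ} (hp : p ∈ range c) :
    Tendsto (fun μ => ∑ j, (c j - μ)⁻¹) (𝓝[>] p) atBot := by
  obtain ⟨i, hi⟩ := hp
  have hcard : (0 : ℝ) < #{j | c j = p} := by
    exact_mod_cast Finset.card_pos.2 ⟨i, by simpa using hi⟩
  simp only [sum_inv_sub_eq_card_mul_add c p]
  exact ((tendsto_inv_sub_nhdsGT p).const_mul_atBot hcard).atBot_add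
    (tendsto_sum_inv_sub_of_ne c p nhdsWithin_le_nhds)

lemma tendsto_sum_inv_sub_nhdsLT {p : ℝ} (hp : p ∈ range c) :
    Tendsto (fun μ => ∑ j, (c j - μ)⁻¹) (𝓝[<] p) atTop := by
  obtain ⟨i, hi⟩ := hp
  have hcard : (0 : ℝ) < #{j | c j = p} := by
    exact_mod_cast Finset.card_pos.2 ⟨i, by simpa using hi⟩
  simp only [sum_inv_sub_eq_card_mul_add c p]
  exact ((tendsto_inv_sub_nhdsLT p).const_mul_atTop hcard).atTop_add
    (tendsto_sum_inv_sub_of_ne c p nhdsWithin_le_nhds)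

theorem exists_sum_inv_sub_eq_zero {p q : ℝ} (hp : p ∈ range c) (hq : q ∈ range c) (hpq : p < q)
    (hgap : ∀ j, c j ∉ Ioo p q) :
    ∃ μ ∈ Ioo p q, (∀ j, c j ≠ μ) ∧ ∑ j, (c j - μ)⁻¹ = 0 := by
  have hne : ∀ j, ∀ μ ∈ Ioo p q, c j ≠ μ := fun j μ hμ h => hgap j (h ▸ hμ)
  have hcont : ContinuousOn (fun μ => ∑ j, (c j - μ)⁻¹) (Ioo p q) :=
    continuousOn_finsetSum _ fun j _ =>
      (continuousOn_const.sub continuousOn_id).inv₀ fun μ hμ => sub_ne_zero.2 (hne j μ hμ)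
  obtain ⟨μ, hμ, hzero⟩ := isPreconnected_Ioo.intermediate_value_Iii
    (le_principal_iff.2 (Ioo_mem_nhdsGT hpq)) (le_principal_iff.2 (Ioo_mem_nhdsLT hpq)) hcont
    (tendsto_sum_inv_sub_nhdsGT c hp) (tendsto_sum_inv_sub_nhdsLT c hq) trivial
  exact ⟨μ, hμ, (hne · μ hμ), hzero⟩

end

theorem stmt5_general (N : ℕ) (c : Fin N → ℝ)
    (a b : ℝ)
    (ha : IsLeast (Set.range c) a)
    (hb : IsLeast {x : ℝ | x ∈ Set.range c ∧ a < x} b) :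
    ∃ μ : ℝ, a < μ ∧ μ < b ∧ (∀ j, c j ≠ μ) ∧ (∑ j, (c j - μ)⁻¹) = 0 := by
  have hgap : ∀ j, c j ∉ Ioo a b := fun j hj => (hb.2 ⟨⟨j, rfl⟩, hj.1⟩).not_gt hj.2
  obtain ⟨μ, hμ, hne, hzero⟩ := exists_sum_inv_sub_eq_zero c ha.1 hb.1.1 hb.1.2 hgap
  exact ⟨μ, hμ.1, hμ.2, hne, hzero⟩

/-- Interlacing claim from the proof of Proposition 1: if `c` is non-constant,
`a` is the smallest value of `c`, and `b` is the smallest value of `c` strictly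
greater than `a`, then `g(μ) = Σ_j (c_j − μ)⁻¹` has a root `μ` with `a < μ < b`. -/
theorem stmt5 (N : ℕ) (hN : 1 ≤ N) (c : Fin N → ℝ)
    (hnc : ∃ i j : Fin N, c i ≠ c j)
    (a b : ℝ)
    (ha : IsLeast (Set.range c) a)
    (hb : IsLeast {x : ℝ | x ∈ Set.range c ∧ a < x} b) :
    ∃ μ : ℝ, a < μ ∧ μ < b ∧ (∀ j, c j ≠ μ) ∧ (∑ j, (c j - μ)⁻¹) = 0 :=
  stmt5_general N c a b ha hb
end

section
/- Let r ≥ 3 be an integer, let η ∈ (0,1), and let d_min, d_max be real numbers with 0 < d_min ≤ d_max. Set C = cos(π/r)^{−r}, κ = (d_min/d_max)·(1 − η), δ* = 2 − 2·((1 − κ)/(1 + κ·C))^{1/r}, and σ* = d_min·(1 − η/2)·(1 + C)/(1 + κ·C). Then the pair (δ*, σ*) satisfies the strict unconditional stability constraints: (1 − (1 − δ*/2)^r)·d_max < σ* and σ* < (1 + (1 − δ*/2)^r·C)·d_min. (This verifies that the closed-form parameters (δ*, σ*) of equation (5.13) satisfy the feasibility inequalities (5.11) for the variable-coefficient diffusion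 splitting.) -/
/-! Writing `A = (1 - κ)/(1 + κ C)`, the choice of `δ*` makes `(1 - δ*/2)^r = A`, and then both
constraints are multiples of `q = (1 + C)/(1 + κ C)`: the lower bound equals `κ q d_max = (1 - η) q d_min`,
the upper bound equals `q d_min`, and `σ* = (1 - η/2) q d_min` sits strictly between them. -/

open Real

lemma cos_pi_div_natCast_pos {r : ℕ} (hr : 2 < r) : 0 < cos (π / r) := by
  have hr' : (2 : ℝ) < r := by exact_mod_cast hr
  apply cos_pos_of_mem_Ioo
  constructor
  · linarith [div_pos pi_pos (by linarith : (0 : ℝ) < r), pi_pos]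
  · calc π / r < π / 2 := div_lt_div_of_pos_left pi_pos two_pos hr'
      _ = _ := by ring

section StabilityWindow

variable {C κ : ℝ}

lemma one_sub_div_one_add_mul (h : 1 + κ * C ≠ 0) :
    1 - (1 - κ) / (1 + κ * C) = κ * ((1 + C) / (1 + κ * C)) := by
  field_simp
  ring

lemma one_add_div_one_add_mul_mul (h : 1 + κ * C ≠ 0) :
    1 + (1 - κ) / (1 + κ * C) * C = (1 + C) / (1 + κ * C) := by
  field_simp
  ring

lemma stability_bounds_of_ratio {η dmin dmax : ℝ} (hC : 0 < 1 + C) (hκC : 0 < 1 + κ * C)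
    (hdmin : 0 < dmin) (hη : 0 < η) (hκd : κ * dmax = dmin * (1 - η)) :
    (1 - (1 - κ) / (1 + κ * C)) * dmax < dmin * (1 - η / 2) * (1 + C) / (1 + κ * C) ∧
      dmin * (1 - η / 2) * (1 + C) / (1 + κ * C) < (1 + (1 - κ) / (1 + κ * C) * C) * dmin := by
  rw [one_sub_div_one_add_mul hκC.ne', one_add_div_one_add_mul_mul hκC.ne', mul_div_assoc]
  have hq : 0 < (1 + C) / (1 + κ * C) := div_pos hC hκC
  constructor <;> nlinarith [mul_pos (mul_pos hq hdmin) hη]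

end StabilityWindow

/-- The closed-form parameters `(δ*, σ*)` of equation (5.13) satisfy the strict
feasibility inequalities (5.11) for the variable-coefficient diffusion
splitting: `(1 − (1 − δ*/2)^r) d_max < σ* < (1 + (1 − δ*/2)^r C) d_min`,
where `C = cos(π/r)^{−r}`, `κ = (d_min/d_max)(1 − η)`,
`δ* = 2 − 2((1 − κ)/(1 + κ C))^{1/r}`, and
`σ* = d_min (1 − η/2)(1 + C)/(1 + κ C)`. -/
theorem stmt11 (r : ℕ) (hr : 3 ≤ r) (η : ℝ) (hη0 : 0 < η) (hη1 : η < 1)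
    (dmin dmax : ℝ) (h1 : 0 < dmin) (h2 : dmin ≤ dmax)
    (C κ δstar σstar : ℝ)
    (hC : C = (Real.cos (Real.pi / r))⁻¹ ^ r)
    (hκ : κ = (dmin / dmax) * (1 - η))
    (hδ : δstar = 2 - 2 * ((1 - κ) / (1 + κ * C)) ^ ((r : ℝ)⁻¹))
    (hσ : σstar = dmin * (1 - η/2) * (1 + C) / (1 + κ * C)) :
    (1 - (1 - δstar/2)^r) * dmax < σstar ∧
      σstar < (1 + (1 - δstar/2)^r * C) * dmin := by
  have hdmax : 0 < dmax := h1.trans_le h2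
  have hCpos : 0 < C := hC ▸ pow_pos (inv_pos.2 (cos_pi_div_natCast_pos hr)) r
  have hκpos : 0 < κ := hκ ▸ mul_pos (div_pos h1 hdmax) (by linarith)
  have hκ1 : κ < 1 := by
    have : dmin / dmax ≤ 1 := (div_le_one hdmax).2 h2
    rw [hκ]
    nlinarith
  have hκC : 0 < 1 + κ * C := by positivity
  have hpow : (1 - δstar / 2) ^ r = (1 - κ) / (1 + κ * C) := by
    have hbase : 1 - δstar / 2 = ((1 - κ) / (1 + κ * C)) ^ ((r : ℝ)⁻¹) := by
      rw [hδ]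
      ring
    rw [hbase]
    exact rpow_inv_natCast_pow (div_pos (by linarith) hκC).le (by omega)
  have hκd : κ * dmax = dmin * (1 - η) := by
    rw [hκ]
    field_simp
  rw [hpow, hσ]
  exact stability_bounds_of_ratio (by linarith) hκC h1 hη0 hκd
end

section
/- Let r ≥ 1 be an integer and δ ∈ (0,1]. Define f : ℝ → ℝ by f(x) = log(x)·(x − 1 + δ)^r (natural logarithm), let a : ℝ → ℝ be its degree-r Taylor polynomial at x = 1, a(x) = Σ_{j=1}^r (f^{(j)}(1)/j!)·(x − 1)^j, and let c(x) = (x − 1 + δ)^r. Then as h → 0 one has a(e^h) − h·c(e^h) = O(h^{r+1}); that is, the function h ↦ a(e^h) − h·c(e^h) is big-O of h^{r+1} in a neighborhood of 0. (This is the implicit-part order condition of Remark 2.1: the polynomials a and c of the new ImEx coefficients define an r-th order approximation.) -/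
/-!
Since `log (e^h) = h`, the substitution `x = e^h` turns `h · c(e^h)` into exactly `f(e^h)`.
The polynomial `a` is the degree-`r` Taylor polynomial of the analytic function `f` at `1`
(its constant term `f 1 = 0` is absent), so `a(e^h) - h · c(e^h) = -(f - a)(e^h)` is
`O((e^h - 1)^(r+1)) = O(h^(r+1))`.
-/

open Topology Asymptotics Filter Finset

theorem AnalyticAt.isBigO_sub_taylorSum {𝕜 : Type*} [NontriviallyNormedField 𝕜]
    [CompleteSpace 𝕜] [CharZero 𝕜] {f : 𝕜 → 𝕜} {x₀ : 𝕜} (hf : AnalyticAt 𝕜 f x₀) (n : ℕ) :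
    (fun x => f x - ∑ j ∈ range n, iteratedDeriv j f x₀ / j.factorial * (x - x₀) ^ j)
      =O[𝓝 x₀] fun x => (x - x₀) ^ n := by
  have hsub : Tendsto (fun x => x - x₀) (𝓝 x₀) (𝓝 0) := by
    simpa using (continuous_sub_right x₀).tendsto x₀
  have h := (hf.hasFPowerSeriesAt.isBigO_sub_partialSum_pow n).comp_tendsto hsub
  rw [← isBigO_norm_right]
  simpa [Function.comp_def, FormalMultilinearSeries.partialSum,
    FormalMultilinearSeries.ofScalars_apply_eq, norm_pow, mul_comm] using h

theorem Real.isBigO_exp_sub_one_pow (n : ℕ) :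
    (fun h : ℝ => (Real.exp h - 1) ^ n) =O[𝓝 0] fun h => h ^ n := by
  simpa using (Real.exp_sub_sum_range_isBigO_pow 1).pow n

theorem stmt12_general (r : ℕ) (δ : ℝ)
    (f a c : ℝ → ℝ)
    (hf : ∀ x, f x = Real.log x * (x - 1 + δ) ^ r)
    (ha : ∀ x, a x = ∑ j ∈ Finset.Icc 1 r,
      (iteratedDeriv j f 1 / (Nat.factorial j : ℝ)) * (x - 1) ^ j)
    (hc : ∀ x, c x = (x - 1 + δ) ^ r) :
    Asymptotics.IsBigO (nhds (0 : ℝ))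
      (fun h : ℝ => a (Real.exp h) - h * c (Real.exp h))
      (fun h : ℝ => h ^ (r + 1)) := by
  have hf_analytic : AnalyticAt ℝ f 1 := by
    rw [funext hf]
    fun_prop (disch := norm_num)
  have hf_one : f 1 = 0 := by simp [hf]
  have hremainder : (fun x => f x - a x) =O[𝓝 1] fun x => (x - 1) ^ (r + 1) := by
    refine (hf_analytic.isBigO_sub_taylorSum (r + 1)).congr_left fun x => ?_
    rw [ha, range_eq_Ico, sum_eq_sum_Ico_succ_bot r.succ_pos]
    simp [hf_one, Ico_add_one_right_eq_Icc]
  have hexp : Tendsto Real.exp (𝓝 0) (𝓝 1) := by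
    simpa using Real.continuous_exp.tendsto 0
  calc (fun h => a (Real.exp h) - h * c (Real.exp h))
      = fun h => -(f (Real.exp h) - a (Real.exp h)) := by
        ext h
        rw [hf, hc, Real.log_exp]
        ring
    _ =O[𝓝 0] fun h => (Real.exp h - 1) ^ (r + 1) := (hremainder.comp_tendsto hexp).neg_left
    _ =O[𝓝 0] fun h => h ^ (r + 1) := Real.isBigO_exp_sub_one_pow (r + 1)

/-- Implicit-part order condition of Remark 2.1: with
`f(x) = log x · (x − 1 + δ)^r`, `a` its degree-`r` Taylor polynomial at `x = 1`,
and `c(x) = (x − 1 + δ)^r`, one has `a(e^h) − h·c(e^h) = O(h^{r+1})` as `h → 0`. -/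
theorem stmt12 (r : ℕ) (hr : 1 ≤ r) (δ : ℝ) (hδ0 : 0 < δ) (hδ1 : δ ≤ 1)
    (f a c : ℝ → ℝ)
    (hf : ∀ x, f x = Real.log x * (x - 1 + δ) ^ r)
    (ha : ∀ x, a x = ∑ j ∈ Finset.Icc 1 r,
      (iteratedDeriv j f 1 / (Nat.factorial j : ℝ)) * (x - 1) ^ j)
    (hc : ∀ x, c x = (x - 1 + δ) ^ r) :
    Asymptotics.IsBigO (nhds (0 : ℝ))
      (fun h : ℝ => a (Real.exp h) - h * c (Real.exp h))
      (fun h : ℝ => h ^ (r + 1)) :=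
  stmt12_general r δ f a c hf ha hc
end

section
/- Let r ≥ 1 be an integer and δ ∈ (0,1]. Define f : ℝ → ℝ by f(x) = log(x)·(x − 1 + δ)^r (natural logarithm), let a : ℝ → ℝ be its degree-r Taylor polynomial at x = 1, a(x) = Σ_{j=1}^r (f^{(j)}(1)/j!)·(x − 1)^j, and let b(x) = (x − 1 + δ)^r − (x − 1)^r. Then as h → 0 one has a(e^h) − h·b(e^h) = O(h^{r+1}); that is, the function h ↦ a(e^h) − h·b(e^h) is big-O of h^{r+1} in a neighborhood of 0. (This is the explicit-part order condition of Remark 2.1: the relation b(z) = c(z) − (z−1)^r ensures the ImEx coefficients satisfy the order conditions for an r-th order scheme.) -/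
/-!
Since `f (e^h) = h (e^h - 1 + δ)^r`, we have
`a (e^h) - h b (e^h) = (a - f) (e^h) + h (e^h - 1)^r`. The first term is the Taylor remainder
of the analytic function `f` at `1`, hence `O((e^h - 1)^(r+1))`, and `e^h - 1 = O(h)`.
-/

open Asymptotics Filter Topology

theorem AnalyticAt.isBigO_sub_sum_iteratedDeriv {𝕜 : Type*} [NontriviallyNormedField 𝕜]
    [CompleteSpace 𝕜] [CharZero 𝕜] {f : 𝕜 → 𝕜} {x : 𝕜} (hf : AnalyticAt 𝕜 f x) (n : ℕ) :
    (fun y => f (x + y) - ∑ j ∈ Finset.range n, iteratedDeriv j f x / j.factorial * y ^ j)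
      =O[𝓝 0] fun y => y ^ n := by
  have := hf.hasFPowerSeriesAt.isBigO_sub_partialSum_pow n
  simp only [FormalMultilinearSeries.partialSum, FormalMultilinearSeries.ofScalars_apply_eq,
    smul_eq_mul, ← norm_pow] at this
  simpa only [mul_comm] using this.of_norm_right

theorem Real.isBigO_comp_exp_sub_one {g : ℝ → ℝ} {n : ℕ} (hg : g =O[𝓝 0] fun y => y ^ n) :
    (fun h => g (Real.exp h - 1)) =O[𝓝 0] fun h => h ^ n := by
  have hlin : (fun h => Real.exp h - 1) =O[𝓝 0] fun h => h := by
    simpa using (Real.hasDerivAt_exp 0).isBigO_sub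
  have hlim : Tendsto (fun h => Real.exp h - 1) (𝓝 0) (𝓝 0) := by
    simpa using (Real.continuous_exp.tendsto 0).sub_const 1
  exact (hg.comp_tendsto hlim).trans (hlin.pow n)

theorem stmt13_general (r : ℕ) (δ : ℝ)
    (f a b : ℝ → ℝ)
    (hf : ∀ x, f x = Real.log x * (x - 1 + δ) ^ r)
    (ha : ∀ x, a x = ∑ j ∈ Finset.Icc 1 r,
      (iteratedDeriv j f 1 / (Nat.factorial j : ℝ)) * (x - 1) ^ j)
    (hb : ∀ x, b x = (x - 1 + δ) ^ r - (x - 1) ^ r) :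
    Asymptotics.IsBigO (nhds (0 : ℝ))
      (fun h : ℝ => a (Real.exp h) - h * b (Real.exp h))
      (fun h : ℝ => h ^ (r + 1)) := by
  have hfa : AnalyticAt ℝ f 1 := by
    rw [funext hf]
    exact (analyticAt_log one_pos).mul (by fun_prop)
  have htaylor : (fun y => f (1 + y) - a (1 + y)) =O[𝓝 0] fun y => y ^ (r + 1) := by
    refine (hfa.isBigO_sub_sum_iteratedDeriv (r + 1)).congr_left fun y => ?_
    rw [ha, Finset.range_eq_Ico, Finset.sum_eq_sum_Ico_succ_bot (by omega : 0 < r + 1),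
      Finset.Ico_add_one_right_eq_Icc, iteratedDeriv_zero, hf 1, Real.log_one]
    simp
  have hrem : (fun h => h * (Real.exp h - 1) ^ r) =O[𝓝 0] fun h => h ^ (r + 1) := by
    simpa only [← pow_succ'] using (isBigO_refl (fun h : ℝ => h) _).mul
      (Real.isBigO_comp_exp_sub_one (g := fun y => y ^ r) (isBigO_refl _ _))
  refine ((Real.isBigO_comp_exp_sub_one htaylor).neg_left.add hrem).congr_left fun h => ?_
  rw [add_sub_cancel, hf, hb, Real.log_exp]
  ring

/-- Explicit-part order condition of Remark 2.1: with
`f(x) = log x · (x − 1 + δ)^r`, `a` its degree-`r` Taylor polynomial at `x = 1`,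
and `b(x) = (x − 1 + δ)^r − (x − 1)^r`, one has
`a(e^h) − h·b(e^h) = O(h^{r+1})` as `h → 0`. -/
theorem stmt13 (r : ℕ) (hr : 1 ≤ r) (δ : ℝ) (hδ0 : 0 < δ) (hδ1 : δ ≤ 1)
    (f a b : ℝ → ℝ)
    (hf : ∀ x, f x = Real.log x * (x - 1 + δ) ^ r)
    (ha : ∀ x, a x = ∑ j ∈ Finset.Icc 1 r,
      (iteratedDeriv j f 1 / (Nat.factorial j : ℝ)) * (x - 1) ^ j)
    (hb : ∀ x, b x = (x - 1 + δ) ^ r - (x - 1) ^ r) :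
    Asymptotics.IsBigO (nhds (0 : ℝ))
      (fun h : ℝ => a (Real.exp h) - h * b (Real.exp h))
      (fun h : ℝ => h ^ (r + 1)) :=
  stmt13_general r δ f a b hf ha hb
end
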